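/- arXiv:2112.05201 — 2 statements merged into one kernel-verified Lean document; each statement's English description precedes it below -/
import Mathlib

section
/- For Clifford numbers a and b in the Clifford algebra R_{0,n}, if b satisfies b * conj(b) = |b|^2 (where |·| is the Euclidean norm on coefficients and conj is Clifford conjugation), then |a*b| = |a|·|b|. -/
/-- The real Clifford algebra `ℝ_{0,n}`, modelled concretely on its basis
`{e_α : α ⊆ {1,…,n}}` as coefficient functions `Finset (Fin n) → ℝ`. -/
abbrev CliffAlg (n : ℕ) := Finset (Fin n) → ℝ

/-- The sign occurring in the product of basis elements `e_S * e_T`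
(coming from `e_i² = -1` and `e_i e_j = -e_j e_i` for `i ≠ j`). -/
def csign {n : ℕ} (S T : Finset (Fin n)) : ℝ :=
  (-1 : ℝ) ^ ((∑ t ∈ T, (S.filter fun s => t < s).card) + (S ∩ T).card)

/-- Clifford multiplication on `ℝ_{0,n}`: `e_S e_T = csign S T • e_{S ∆ T}`. -/
def cmul {n : ℕ} (a b : CliffAlg n) : CliffAlg n := fun U =>
  ∑ S : Finset (Fin n), ∑ T : Finset (Fin n),
    (if symmDiff S T = U then a S * b T * csign S T else 0)

/-- The unit `1 = e_∅` of the Clifford algebra. -/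
def cone {n : ℕ} : CliffAlg n := fun S => if S = (∅ : Finset (Fin n)) then 1 else 0

/-- Clifford conjugation `a ↦ ā` (on the basis, `ē_α = (-1)^{k(k+1)/2} e_α` for `k = |α|`). -/
def cconj {n : ℕ} (a : CliffAlg n) : CliffAlg n := fun S =>
  (-1 : ℝ) ^ (S.card * (S.card + 1) / 2) * a S

/-- The Euclidean norm of the coefficients, `|a| = (∑_α a_α²)^{1/2}`. -/
noncomputable def cnorm {n : ℕ} (a : CliffAlg n) : ℝ :=
  Real.sqrt (∑ S : Finset (Fin n), a S ^ 2)

/-- The real (scalar) part of a Clifford number. -/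
def cre {n : ℕ} (a : CliffAlg n) : ℝ := a ∅

/-- Positive semidefinite Clifford numbers: those of the form `a = b b̄`. -/
def CPos {n : ℕ} (a : CliffAlg n) : Prop := ∃ b : CliffAlg n, a = cmul b (cconj b)

/-- The purely imaginary paravector `Σ i, v i • e_i`. -/
def cvec {n : ℕ} (v : Fin n → ℝ) : CliffAlg n := fun S =>
  ∑ i : Fin n, if S = {i} then v i else 0

/-! The signs of basis products form a bicharacter of `(Finset (Fin n), ∆)` whose diagonal is the
sign of Clifford conjugation. This makes `cmul` associative and makes right multiplication by `b̄`
the adjoint of right multiplication by `b` for the coefficient inner product `x ⬝ᵥ y`, so that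
`|ab|² = ⟨ab, ab⟩ = ⟨a, (ab) b̄⟩ = ⟨a, a (b b̄)⟩ = |b|² |a|²`. -/

open Finset
open scoped symmDiff

theorem Finset.prod_symmDiff_of_mul_self {ι M : Type*} [DecidableEq ι] [CommMonoid M]
    {f : ι → M} (hf : ∀ i, f i * f i = 1) (s t : Finset ι) :
    ∏ i ∈ s ∆ t, f i = (∏ i ∈ s, f i) * ∏ i ∈ t, f i := by
  rw [Finset.symmDiff_def, prod_union disjoint_sdiff_sdiff, ← prod_inter_mul_prod_sdiff s t,
    ← prod_inter_mul_prod_sdiff t s, inter_comm t s, mul_mul_mul_comm, ← prod_mul_distrib,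
    prod_eq_one fun i _ => hf i, one_mul]

theorem ite_neg_one_mul_self {R : Type*} [Monoid R] [HasDistribNeg R] (p : Prop) [Decidable p] :
    (if p then (-1 : R) else 1) * (if p then -1 else 1) = 1 := by
  split_ifs <;> simp

section LinearOrder

variable {α : Type*} [LinearOrder α]

theorem card_filter_le_eq (S : Finset α) (t : α) :
    #(S.filter (t ≤ ·)) = #(S.filter (t < ·)) + if t ∈ S then 1 else 0 := by
  simp only [card_filter, ← sum_ite_eq' S t (fun _ => 1), ← sum_add_distrib]
  refine sum_congr rfl fun s _ => ?_
  rcases lt_trichotomy t s with h | rfl | h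
  · simp [h.le, h, h.ne']
  · simp
  · simp [not_le.2 h, not_lt.2 h.le, h.ne]

theorem sum_card_filter_lt (S : Finset α) :
    ∑ t ∈ S, #(S.filter (t < ·)) = (#S).choose 2 := by
  induction S using Finset.induction_on_max with
  | empty => simp
  | insert a S ha ih =>
    have haS : a ∉ S := fun h => lt_irrefl a (ha a h)
    have h_top : (insert a S).filter (a < ·) = ∅ :=
      filter_eq_empty_iff.2 fun x hx => by
        rcases mem_insert.1 hx with rfl | hx
        exacts [lt_irrefl x, (ha x hx).not_gt]
    have h_rest : ∀ t ∈ S, #((insert a S).filter (t < ·)) = #(S.filter (t < ·)) + 1 :=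
      fun t ht => by
        rw [filter_insert, if_pos (ha t ht), card_insert_of_notMem fun h => haS (mem_filter.1 h).1]
    rw [sum_insert haS, h_top, sum_congr rfl h_rest, sum_add_distrib, ih, card_insert_of_notMem haS,
      Nat.choose_succ_succ', Nat.choose_one_right]
    simp [add_comm]

end LinearOrder

section Clifford

variable {n : ℕ}

theorem csign_eq_prod (S T : Finset (Fin n)) :
    csign S T = ∏ s ∈ S, ∏ t ∈ T, if t ≤ s then -1 else 1 := by
  rw [csign, prod_comm]
  simp only [prod_ite, prod_const_one, prod_const, mul_one, card_filter_le_eq, pow_add,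
    prod_mul_distrib, prod_pow_eq_pow_sum]
  rw [sum_boole, Nat.cast_id, filter_mem_eq_inter, inter_comm]

theorem csign_mul_self (S T : Finset (Fin n)) : csign S T * csign S T = 1 := by
  rw [csign, ← pow_add, ← two_mul, pow_mul, neg_one_sq, one_pow]

theorem csign_symmDiff_left (S S' T : Finset (Fin n)) :
    csign (S ∆ S') T = csign S T * csign S' T := by
  simp only [csign_eq_prod]
  exact prod_symmDiff_of_mul_self (fun s => by
    rw [← prod_mul_distrib]; exact prod_eq_one fun t _ => ite_neg_one_mul_self _) S S'

theorem csign_symmDiff_right (S T T' : Finset (Fin n)) :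
    csign S (T ∆ T') = csign S T * csign S T' := by
  simp only [csign_eq_prod, ← prod_mul_distrib]
  exact prod_congr rfl fun s _ => prod_symmDiff_of_mul_self (fun t => ite_neg_one_mul_self _) T T'

theorem csign_empty_right (S : Finset (Fin n)) : csign S ∅ = 1 := by
  simp [csign]

theorem csign_self (S : Finset (Fin n)) : csign S S = (-1) ^ (#S * (#S + 1) / 2) := by
  have h : (#S).choose 2 + #S = (#S + 1).choose 2 := by
    rw [Nat.choose_succ_succ', Nat.choose_one_right, add_comm]
  rw [csign, sum_card_filter_lt, inter_self, h, Nat.choose_two_right, Nat.add_sub_cancel, mul_comm]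

theorem cmul_apply (a b : CliffAlg n) (U : Finset (Fin n)) :
    cmul a b U = ∑ S, a S * b (S ∆ U) * csign S (S ∆ U) := by
  refine sum_congr rfl fun S _ => ?_
  have h (T : Finset (Fin n)) : S ∆ T = U ↔ T = S ∆ U := by
    rw [← symmDiff_right_inj (a := S), symmDiff_symmDiff_cancel_left]
  simp_rw [h, sum_ite_eq', mem_univ, if_true]

theorem cmul_apply' (a b : CliffAlg n) (U : Finset (Fin n)) :
    cmul a b U = ∑ T, a (U ∆ T) * b T * csign (U ∆ T) T := by
  rw [cmul, sum_comm]
  refine sum_congr rfl fun T _ => ?_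
  have h (S : Finset (Fin n)) : S ∆ T = U ↔ S = U ∆ T := by
    rw [← symmDiff_left_inj (b := T), symmDiff_symmDiff_cancel_right]
  simp_rw [h, sum_ite_eq', mem_univ, if_true]

theorem cmul_assoc (a b c : CliffAlg n) : cmul (cmul a b) c = cmul a (cmul b c) := by
  ext W
  simp only [cmul_apply' (cmul a b), cmul_apply a (cmul b c), cmul_apply a b, cmul_apply' b c,
    sum_mul, mul_sum]
  rw [sum_comm]
  refine sum_congr rfl fun S _ => sum_congr rfl fun V _ => ?_
  rw [← symmDiff_assoc]
  simp only [csign_symmDiff_left, csign_symmDiff_right]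
  ring

theorem cmul_smul_cone (a : CliffAlg n) (r : ℝ) : cmul a (r • cone) = r • a := by
  ext U
  simp [cmul_apply, cone, Finset.symmDiff_eq_empty, csign_empty_right, mul_comm]

theorem cmul_dotProduct (x b y : CliffAlg n) : cmul x b ⬝ᵥ y = x ⬝ᵥ cmul y (cconj b) := by
  simp only [dotProduct, cmul_apply, sum_mul, mul_sum, cconj]
  rw [sum_comm]
  refine sum_congr rfl fun S _ => sum_congr rfl fun U _ => ?_
  rw [symmDiff_comm U S, ← csign_self, csign_symmDiff_left S U (S ∆ U)]
  linear_combination -(x S * y U * b (S ∆ U) * csign S (S ∆ U)) * csign_mul_self U (S ∆ U)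

theorem cnorm_nonneg (a : CliffAlg n) : 0 ≤ cnorm a := Real.sqrt_nonneg _

theorem cnorm_eq_sqrt_dotProduct (a : CliffAlg n) : cnorm a = √(a ⬝ᵥ a) := by
  simp [cnorm, dotProduct, sq]

end Clifford

/-- If `b b̄ = |b|²` (as a Clifford number), then `|a b| = |a| |b|` for every `a`. -/
theorem cnorm_cmul_of_self_mul_conj (n : ℕ) (a b : CliffAlg n)
    (hb : cmul b (cconj b) = (cnorm b ^ 2) • (cone : CliffAlg n)) :
    cnorm (cmul a b) = cnorm a * cnorm b := by
  have h : cmul a b ⬝ᵥ cmul a b = (a ⬝ᵥ a) * cnorm b ^ 2 := by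
    rw [cmul_dotProduct, cmul_assoc, hb, cmul_smul_cone, dotProduct_smul, smul_eq_mul, mul_comm]
  rw [cnorm_eq_sqrt_dotProduct, h, Real.sqrt_mul' _ (sq_nonneg _), ← cnorm_eq_sqrt_dotProduct,
    Real.sqrt_sq (cnorm_nonneg b)]
end

section
/- Let Y be a closed right submodule of a Clifford module H_n and Y^⊥ = {x : ⟨x,y⟩ = 0 for all y ∈ Y}. Then Y^⊥ is a closed right submodule, H_n = Y ⊕ Y^⊥ (every x decomposes uniquely as y + z with y ∈ Y, z ∈ Y^⊥), and (Y^⊥)^⊥ = Y. -/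
/-- A Clifford (Hilbert) module `H_n` over `ℝ_{0,n}`: a real vector space with a right
`ℝ_{0,n}`-action `smulR` and an `ℝ_{0,n}`-valued inner product `inner`. -/
structure CModule (n : ℕ) (H : Type*) [AddCommGroup H] [Module ℝ H] where
  smulR : H → CliffAlg n → H
  inner : H → H → CliffAlg n
  smulR_add : ∀ x a b, smulR x (a + b) = smulR x a + smulR x b
  add_smulR : ∀ x y a, smulR (x + y) a = smulR x a + smulR y a
  smulR_mul : ∀ x a b, smulR x (cmul a b) = smulR (smulR x a) b
  smulR_one : ∀ x, smulR x cone = x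
  smulR_real : ∀ (r : ℝ) x a, smulR (r • x) a = r • smulR x a
  real_smulR : ∀ (r : ℝ) x a, smulR x (r • a) = r • smulR x a
  inner_add_left : ∀ x y z, inner (x + y) z = inner x z + inner y z
  inner_add_right : ∀ x y z, inner x (y + z) = inner x y + inner x z
  conj_inner : ∀ x y, cconj (inner x y) = inner y x
  inner_smulR_left : ∀ x y a, inner (smulR x a) y = cmul (inner x y) a
  inner_self_pos : ∀ x, CPos (inner x x)
  inner_self_eq_zero : ∀ x, inner x x = 0 → x = 0

variable {n : ℕ} {H : Type*} [AddCommGroup H] [Module ℝ H]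

/-- The norm `‖x‖ = (Re⟨x,x⟩)^{1/2}` on a Clifford module. -/
noncomputable def cnrm (CM : CModule n H) (x : H) : ℝ := Real.sqrt (cre (CM.inner x x))

/-- Convergence of a sequence with respect to the Clifford-module norm. -/
def SeqLim (CM : CModule n H) (u : ℕ → H) (x : H) : Prop :=
  ∀ ε : ℝ, 0 < ε → ∃ N : ℕ, ∀ m ≥ N, cnrm CM (u m - x) < ε

/-- Cauchy sequences with respect to the Clifford-module norm. -/
def IsCauchySeq' (CM : CModule n H) (u : ℕ → H) : Prop :=
  ∀ ε : ℝ, 0 < ε → ∃ N : ℕ, ∀ p ≥ N, ∀ q ≥ N, cnrm CM (u p - u q) < ε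

/-- Completeness of the Clifford module (every Cauchy sequence converges). -/
def IsComplete' (CM : CModule n H) : Prop :=
  ∀ u : ℕ → H, IsCauchySeq' CM u → ∃ x : H, SeqLim CM u x

/-- (Sequentially) closed subsets of a Clifford module. -/
def SeqClosed (CM : CModule n H) (K : Set H) : Prop :=
  ∀ (u : ℕ → H) (x : H), (∀ i, u i ∈ K) → SeqLim CM u x → x ∈ K

/-- Right submodules of a Clifford module. -/
def IsRightSubmodule (CM : CModule n H) (Y : Set H) : Prop :=
  (0 : H) ∈ Y ∧ (∀ x ∈ Y, ∀ y ∈ Y, x + y ∈ Y) ∧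
  (∀ x ∈ Y, ∀ r : ℝ, r • x ∈ Y) ∧ (∀ x ∈ Y, ∀ a : CliffAlg n, CM.smulR x a ∈ Y)

/-- Dense subsets of a Clifford module. -/
def DenseSub (CM : CModule n H) (D : Set H) : Prop :=
  ∀ x : H, ∀ ε : ℝ, 0 < ε → ∃ y ∈ D, cnrm CM (x - y) < ε

/-- Right linearity of an operator on its domain `D`. -/
def IsRightLinearOn (CM : CModule n H) (D : Set H) (T : H → H) : Prop :=
  (∀ x ∈ D, ∀ y ∈ D, T (x + y) = T x + T y) ∧
  (∀ x ∈ D, ∀ r : ℝ, T (r • x) = r • T x) ∧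
  (∀ x ∈ D, ∀ a : CliffAlg n, T (CM.smulR x a) = CM.smulR (T x) a)

/-- The orthogonal complement `Y^⊥ = {x : ⟨x,y⟩ = 0 for all y ∈ Y}`. -/
def ocSet (CM : CModule n H) (Y : Set H) : Set H := {x | ∀ y ∈ Y, CM.inner x y = 0}

/-- A closed operator: the graph is (sequentially) closed. -/
def GraphClosed (CM : CModule n H) (D : Set H) (T : H → H) : Prop :=
  ∀ (u : ℕ → H) (x y : H), (∀ i, u i ∈ D) → SeqLim CM u x →
    SeqLim CM (fun i => T (u i)) y → x ∈ D ∧ T x = y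

/-- The operator `Q_s(T) = T² - 2 Re(s) T + |s|² I` associated with the paravector
`s = (s₀, (s₁,…,sₙ))`. -/
def QsOp {n : ℕ} (T : H → H) (s : ℝ × (Fin n → ℝ)) : H → H := fun x =>
  T (T x) - (2 * s.1) • T x + (s.1 ^ 2 + ∑ i, s.2 i ^ 2) • x

/-- Membership of the paravector `s` in the `S`-resolvent set of the (possibly
unbounded) operator `T` with domain `D`: `Q_s(T)` is injective on `D(T²)`, has dense
range, and has bounded inverse. -/
def InRhoS (CM : CModule n H) (D : Set H) (T : H → H) (s : ℝ × (Fin n → ℝ)) : Prop :=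
  (∀ x, (x ∈ D ∧ T x ∈ D) → ∀ y, (y ∈ D ∧ T y ∈ D) → QsOp T s x = QsOp T s y → x = y) ∧
  (∀ z : H, ∀ ε : ℝ, 0 < ε → ∃ x, (x ∈ D ∧ T x ∈ D) ∧ cnrm CM (QsOp T s x - z) < ε) ∧
  (∃ c : ℝ, ∀ x, (x ∈ D ∧ T x ∈ D) → cnrm CM x ≤ c * cnrm CM (QsOp T s x))

/-- The `S`-spectrum of a bounded operator `T`: the paravectors `s` for which
`Q_s(T)` has no bounded two-sided inverse. -/
def sSpec (CM : CModule n H) (T : H → H) : Set (ℝ × (Fin n → ℝ)) :=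
  {s | ¬ ∃ B : H → H, (∀ x, B (QsOp T s x) = x) ∧ (∀ x, QsOp T s (B x) = x) ∧
        ∃ c : ℝ, ∀ x, cnrm CM (B x) ≤ c * cnrm CM x}

/-- The operator norm `‖T‖ = sup_{‖x‖ ≤ 1} ‖T x‖`. -/
noncomputable def opNorm' (CM : CModule n H) (T : H → H) : ℝ :=
  sSup {r : ℝ | ∃ x : H, cnrm CM x ≤ 1 ∧ r = cnrm CM (T x)}

/-!
Since `Re (b b̄) = ∑_S b_S²`, the real part `Re ⟨x, y⟩` is a genuine real inner product, and it
induces the norm `‖·‖`; so `H_n` is a real Hilbert space and a closed right submodule `Y` is a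
closed real subspace. On sets closed under the right action, Clifford orthogonality coincides with
real orthogonality, because `⟨y, x⟩` is recovered from the real parts of the `⟨y e_T, x⟩`. Hence
`Y^⊥` is the real orthogonal complement of `Y`, and the projection theorem gives the rest.
-/

open Finset Filter Topology
open scoped RealInnerProductSpace

theorem two_mul_sum_card_filter_lt_add_card {α : Type*} [LinearOrder α] (S : Finset α) :
    2 * ∑ t ∈ S, #{s ∈ S | t < s} + #S = #S * #S := by
  induction S using Finset.induction_on_max with
  | empty => simp
  | insert a S ha ih =>
    have haS : a ∉ S := fun h => lt_irrefl a (ha a h)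
    have hfilter : ∀ t ∈ S, #{s ∈ insert a S | t < s} = #{s ∈ S | t < s} + 1 := fun t ht => by
      rw [filter_insert, if_pos (ha t ht), card_insert_of_notMem (by simp [haS])]
    have htop : #{s ∈ insert a S | a < s} = 0 := by
      simpa [filter_insert] using fun x hx => (ha x hx).le
    rw [sum_insert haS, htop, sum_congr rfl hfilter, sum_add_distrib, card_insert_of_notMem haS]
    simp only [sum_const, smul_eq_mul, mul_one, zero_add]
    nlinarith

/-- `e_S ē_S = 1`: the two sign exponents add up to `|S| (|S| + 1)`. -/
theorem csign_self_mul_neg_one_pow {n : ℕ} (S : Finset (Fin n)) :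
    csign S S * (-1 : ℝ) ^ (#S * (#S + 1) / 2) = 1 := by
  rw [csign, ← pow_add, inter_self]
  apply Even.neg_one_pow
  have hpairs := two_mul_sum_card_filter_lt_add_card S
  have hhalf : 2 * (#S * (#S + 1) / 2) = #S * (#S + 1) :=
    Nat.two_mul_div_two_of_even (Nat.even_mul_succ_self _)
  have hexp : ∑ t ∈ S, #{s ∈ S | t < s} + #S + #S * (#S + 1) / 2 = #S * (#S + 1) := by
    nlinarith
  rw [hexp]
  exact Nat.even_mul_succ_self _

theorem csign_ne_zero {n : ℕ} (S T : Finset (Fin n)) : csign S T ≠ 0 :=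
  pow_ne_zero _ (by norm_num)

theorem cre_cmul {n : ℕ} (a b : CliffAlg n) :
    cre (cmul a b) = ∑ S, a S * b S * csign S S := by
  simp [cre, cmul, Finset.symmDiff_eq_empty]

theorem cre_cmul_single {n : ℕ} (c : CliffAlg n) (T : Finset (Fin n)) (t : ℝ) :
    cre (cmul c (Pi.single T t)) = c T * t * csign T T := by
  simp [cre_cmul, Pi.single_apply]

theorem cre_cmul_cconj_self {n : ℕ} (b : CliffAlg n) :
    cre (cmul b (cconj b)) = ∑ S, b S ^ 2 := by
  rw [cre_cmul]
  refine sum_congr rfl fun S _ => ?_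
  unfold cconj
  linear_combination (b S ^ 2) * csign_self_mul_neg_one_pow S

theorem cre_cconj {n : ℕ} (a : CliffAlg n) : cre (cconj a) = cre a := by
  simp [cre, cconj]

theorem cconj_zero {n : ℕ} : cconj (0 : CliffAlg n) = 0 := by
  funext S; simp [cconj]

theorem cmul_zero_left {n : ℕ} (b : CliffAlg n) : cmul 0 b = 0 := by
  funext U; simp [cmul]

theorem smul_cone {n : ℕ} (r : ℝ) : r • (cone : CliffAlg n) = Pi.single ∅ r := by
  funext S; by_cases h : S = ∅ <;> simp [cone, h]

namespace CModule

variable (CM : CModule n H)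

theorem inner_zero_left (y : H) : CM.inner 0 y = 0 := by
  simpa using CM.inner_add_left 0 0 y

theorem inner_eq_zero_comm {x y : H} : CM.inner x y = 0 ↔ CM.inner y x = 0 := by
  constructor <;> intro h <;> rw [← CM.conj_inner, h, cconj_zero]

theorem smul_eq_smulR (r : ℝ) (x : H) : r • x = CM.smulR x (Pi.single ∅ r) := by
  rw [← smul_cone, CM.real_smulR, CM.smulR_one]

noncomputable def reInner (x y : H) : ℝ := cre (CM.inner x y)

theorem reInner_comm (x y : H) : CM.reInner x y = CM.reInner y x := by
  rw [reInner, reInner, ← CM.conj_inner x y, cre_cconj]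

theorem reInner_add_left (x y z : H) :
    CM.reInner (x + y) z = CM.reInner x z + CM.reInner y z := by
  simp [reInner, CM.inner_add_left, cre]

theorem reInner_smul_left (r : ℝ) (x y : H) : CM.reInner (r • x) y = r * CM.reInner x y := by
  rw [reInner, smul_eq_smulR, inner_smulR_left, cre_cmul_single]
  simp [csign, reInner, cre, mul_comm]

theorem reInner_self_eq_sum_sq (x : H) : ∃ b : CliffAlg n, CM.inner x x = cmul b (cconj b) ∧
    CM.reInner x x = ∑ S, b S ^ 2 := by
  obtain ⟨b, hb⟩ := CM.inner_self_pos x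
  exact ⟨b, hb, by rw [reInner, hb, cre_cmul_cconj_self]⟩

theorem reInner_self_nonneg (x : H) : 0 ≤ CM.reInner x x := by
  obtain ⟨b, -, hsum⟩ := CM.reInner_self_eq_sum_sq x
  exact hsum ▸ sum_nonneg fun S _ => sq_nonneg (b S)

theorem eq_zero_of_reInner_self_eq_zero {x : H} (h : CM.reInner x x = 0) : x = 0 := by
  obtain ⟨b, hb, hsum⟩ := CM.reInner_self_eq_sum_sq x
  have hb0 : b = 0 := funext fun S => pow_eq_zero_iff two_ne_zero |>.mp <|
    (sum_eq_zero_iff_of_nonneg fun S _ => sq_nonneg (b S)).mp (hsum ▸ h) S (mem_univ S)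
  exact CM.inner_self_eq_zero x (by rw [hb, hb0, cmul_zero_left])

/-- Since `Re (c e_T) = ± c_T`, the real parts of the `⟨y e_T, x⟩` are the coefficients of
`⟨y, x⟩`. -/
theorem inner_eq_zero_of_forall_reInner_smulR {x y : H}
    (h : ∀ a, CM.reInner (CM.smulR y a) x = 0) : CM.inner y x = 0 := by
  funext T
  have hT := h (Pi.single T 1)
  rw [reInner, inner_smulR_left, cre_cmul_single, mul_one] at hT
  exact (mul_eq_zero.mp hT).resolve_right (csign_ne_zero T T)

noncomputable abbrev reInnerCore : InnerProductSpace.Core ℝ H where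
  inner := CM.reInner
  conj_inner_symm x y := CM.reInner_comm y x
  re_inner_nonneg := CM.reInner_self_nonneg
  add_left := CM.reInner_add_left
  smul_left x y r := CM.reInner_smul_left r x y
  definite _ := CM.eq_zero_of_reInner_self_eq_zero

end CModule

theorem isRightSubmodule_ocSet (CM : CModule n H) (Y : Set H) :
    IsRightSubmodule CM (ocSet CM Y) := by
  have smulR_mem : ∀ x ∈ ocSet CM Y, ∀ a, CM.smulR x a ∈ ocSet CM Y := fun x hx a y hy => by
    rw [CM.inner_smulR_left, hx y hy, cmul_zero_left]
  refine ⟨fun y _ => CM.inner_zero_left y, fun x hx x' hx' y hy => ?_,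
    fun x hx r => CM.smul_eq_smulR r x ▸ smulR_mem x hx _, smulR_mem⟩
  rw [CM.inner_add_left, hx y hy, hx' y hy, add_zero]

def IsRightSubmodule.toSubmodule {CM : CModule n H} {Y : Set H} (hY : IsRightSubmodule CM Y) :
    Submodule ℝ H where
  carrier := Y
  zero_mem' := hY.1
  add_mem' ha hb := hY.2.1 _ ha _ hb
  smul_mem' r x hx := hY.2.2.1 x hx r

@[simp]
theorem IsRightSubmodule.coe_toSubmodule {CM : CModule n H} {Y : Set H}
    (hY : IsRightSubmodule CM Y) : (hY.toSubmodule : Set H) = Y :=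
  rfl

theorem Submodule.existsUnique_add_mem_mem_orthogonal {𝕜 E : Type*} [RCLike 𝕜]
    [NormedAddCommGroup E] [InnerProductSpace 𝕜 E] (K : Submodule 𝕜 E)
    [K.HasOrthogonalProjection] (x : E) : ∃! p : E × E, p.1 ∈ K ∧ p.2 ∈ Kᗮ ∧ x = p.1 + p.2 := by
  obtain ⟨y, hy, z, hz, hx⟩ := K.exists_add_mem_mem_orthogonal x
  refine ⟨(y, z), ⟨hy, hz, hx⟩, ?_⟩
  rintro ⟨y', z'⟩ ⟨hy' : y' ∈ K, hz' : z' ∈ Kᗮ, hx' : x = y' + z'⟩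
  have hyy' : y' = y := by
    rw [← K.eq_starProjection_of_mem_orthogonal' hy' hz' hx',
      K.eq_starProjection_of_mem_orthogonal' hy hz hx]
  rw [hyy'] at hx' ⊢
  rw [add_left_cancel (hx'.symm.trans hx)]

section InnerProductSpace

variable {E : Type*} [NormedAddCommGroup E] [InnerProductSpace ℝ E] {CM : CModule n E}

theorem cnrm_eq_norm (hre : ∀ x y, ⟪x, y⟫ = CM.reInner x y) (x : E) : cnrm CM x = ‖x‖ := by
  rw [cnrm, ← CModule.reInner, ← hre, real_inner_self_eq_norm_sq, Real.sqrt_sq (norm_nonneg x)]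

theorem seqLim_iff_tendsto (hre : ∀ x y, ⟪x, y⟫ = CM.reInner x y) {u : ℕ → E} {x : E} :
    SeqLim CM u x ↔ Tendsto u atTop (𝓝 x) := by
  simp only [SeqLim, Metric.tendsto_atTop, dist_eq_norm, cnrm_eq_norm hre]

theorem completeSpace_of_isComplete' (hre : ∀ x y, ⟪x, y⟫ = CM.reInner x y)
    (hcomp : IsComplete' CM) : CompleteSpace E :=
  Metric.complete_of_cauchySeq_tendsto fun u hu => by
    obtain ⟨x, hx⟩ := hcomp u <| by
      simpa only [IsCauchySeq', Metric.cauchySeq_iff, dist_eq_norm, cnrm_eq_norm hre] using hu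
    exact ⟨x, (seqLim_iff_tendsto hre).mp hx⟩

theorem seqClosed_iff_isClosed (hre : ∀ x y, ⟪x, y⟫ = CM.reInner x y) {K : Set E} :
    SeqClosed CM K ↔ IsClosed K := by
  rw [← isSeqClosed_iff_isClosed]
  exact ⟨fun h u x hu hux => h u x hu ((seqLim_iff_tendsto hre).mpr hux),
    fun h u x hu hux => h hu ((seqLim_iff_tendsto hre).mp hux)⟩

theorem ocSet_eq_orthogonal (hre : ∀ x y, ⟪x, y⟫ = CM.reInner x y) (K : Submodule ℝ E)
    (hK : ∀ x ∈ K, ∀ a, CM.smulR x a ∈ K) : ocSet CM K = Kᗮ := by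
  ext x
  simp only [ocSet, Set.mem_ofPred_eq, SetLike.mem_coe, Submodule.mem_orthogonal, hre]
  refine ⟨fun hx y hy => ?_, fun hx y hy => ?_⟩
  · rw [CModule.reInner, CM.inner_eq_zero_comm.mp (hx y hy)]
    rfl
  · exact CM.inner_eq_zero_comm.mpr
      (CM.inner_eq_zero_of_forall_reInner_smulR fun a => hx _ (hK y hy a))

end InnerProductSpace

/-- Orthogonal decomposition: for a closed right submodule `Y` of a complete Clifford
module, `Y^⊥` is a closed right submodule, `H_n = Y ⊕ Y^⊥` (unique decomposition), and
`(Y^⊥)^⊥ = Y`. -/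
theorem clifford_orthogonal_decomposition (CM : CModule n H) (hcomp : IsComplete' CM)
    (Y : Set H) (hsub : IsRightSubmodule CM Y) (hcl : SeqClosed CM Y) :
    IsRightSubmodule CM (ocSet CM Y) ∧ SeqClosed CM (ocSet CM Y) ∧
    (∀ x : H, ∃! p : H × H, p.1 ∈ Y ∧ p.2 ∈ ocSet CM Y ∧ x = p.1 + p.2) ∧
    ocSet CM (ocSet CM Y) = Y := by
  let _ : NormedAddCommGroup H := CM.reInnerCore.toNormedAddCommGroup
  let _ : InnerProductSpace ℝ H := InnerProductSpace.ofCore CM.reInnerCore.toCore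
  have hre : ∀ x y : H, ⟪x, y⟫ = CM.reInner x y := fun _ _ => rfl
  have := completeSpace_of_isComplete' hre hcomp
  let K := hsub.toSubmodule
  have := ((seqClosed_iff_isClosed hre).mp hcl).completeSpace_coe (s := (K : Set H))
  have hperp : ocSet CM Y = Kᗮ := ocSet_eq_orthogonal hre K hsub.2.2.2
  have hperp_sub : IsRightSubmodule CM (Kᗮ : Set H) := hperp ▸ isRightSubmodule_ocSet CM Y
  rw [hperp]
  refine ⟨hperp_sub, (seqClosed_iff_isClosed hre).mpr K.isClosed_orthogonal,
    K.existsUnique_add_mem_mem_orthogonal, ?_⟩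
  rw [ocSet_eq_orthogonal hre Kᗮ hperp_sub.2.2.2, K.orthogonal_orthogonal]
  exact hsub.coe_toSubmodule
end
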